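/- arXiv:2601.08362 — 2 statements merged into one kernel-verified Lean document; each statement's English description precedes it below -/
import Mathlib

section
/- Let z̄ = (x̄,ȳ) ∈ ℝ^m × S^n. The following are equivalent: (a) the constraint nondegeneracy holds at z̄; (b) there exists an open neighborhood U of z̄ in ℝ^m × S^n such that the W-SRCQ holds at every z ∈ U; (c) there exists an open neighborhood V of ȳ in S^n such that the W-SRCQ holds at (x̄, y) for every y ∈ V. -/
open scoped Classical RealInnerProductSpace
open Matrix Set

noncomputable section

abbrev Mat (n : ℕ) : Type := Matrix (Fin n) (Fin n) ℝ

abbrev Em (m : ℕ) : Type := EuclideanSpace ℝ (Fin m)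

attribute [instance] Matrix.frobeniusNormedAddCommGroup Matrix.frobeniusNormedSpace

/-- The trace (Frobenius) inner product `⟨A,B⟩ = tr(AᵀB)` on matrices; for symmetric
matrices this is `tr(AB)`. -/
def minner {n : ℕ} (A B : Mat n) : ℝ := (Aᵀ * B).trace

/-- `P` is an orthogonal matrix. -/
def IsOrthoMat {n : ℕ} (P : Mat n) : Prop := P * Pᵀ = 1 ∧ Pᵀ * P = 1

/-- `(P, lam)` is an eigenvalue decomposition of `A` with orthogonal `P` and
nonincreasing eigenvalue vector `lam`: `A = P·Diag(lam)·Pᵀ`. -/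
def IsEigDecomp {n : ℕ} (A P : Mat n) (lam : Fin n → ℝ) : Prop :=
  IsOrthoMat P ∧ Antitone lam ∧ A = P * Matrix.diagonal lam * Pᵀ

/-- The stratum `M_{p,q}` of symmetric matrices with exactly `p` positive and `q` negative
eigenvalues. -/
def stratum (n p q : ℕ) : Set (Mat n) :=
  {A | ∃ P lam, IsEigDecomp A P lam ∧
    {i : Fin n | 0 < lam i}.ncard = p ∧ {i : Fin n | lam i < 0}.ncard = q}

/-- The metric projection `Π₊` onto the positive semidefinite cone (defined through an
eigenvalue decomposition; the value is independent of the choice of decomposition). -/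
noncomputable def piPlus {n : ℕ} (A : Mat n) : Mat n :=
  if h : ∃ P lam, IsEigDecomp A P lam then
    h.choose * Matrix.diagonal (fun i => max (h.choose_spec.choose i) 0) * h.chooseᵀ
  else 0

variable {m n : ℕ}

/-- `G(z) = g(x) + y`. -/
def Gmap (g : Em m → Mat n) (z : Em m × Mat n) : Mat n := g z.1 + z.2

/-- The adjoint `∇g(x) : Sⁿ → ℝᵐ` of the derivative `g'(x)`, characterized by
`⟨∇g(x)H, v⟩ = ⟨H, g'(x)v⟩`. -/
def gradg (g : Em m → Mat n) (x : Em m) (H : Mat n) : Em m :=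
  (EuclideanSpace.equiv (Fin m) ℝ).symm
    fun k => (Hᵀ * fderiv ℝ g x (EuclideanSpace.single k 1)).trace

/-- The Lagrangian `L(x,y) = f(x) + ⟨y, g(x)⟩`. -/
def Lfun (f : Em m → ℝ) (g : Em m → Mat n) (x : Em m) (y : Mat n) : ℝ :=
  f x + minner y (g x)

/-- The Hessian `∇²ₓₓL(x,y)` of `x ↦ L(x,y)`, as a continuous linear map `ℝᵐ → ℝᵐ`. -/
def hessL (f : Em m → ℝ) (g : Em m → Mat n) (x : Em m) (y : Mat n) : Em m →L[ℝ] Em m :=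
  fderiv ℝ (fun u => gradient (fun w => Lfun f g w y) u) x

/-- The KKT mapping `F(z) = (∇f(x) + ∇g(x)y, −g(x) + Π₊(G(z)))`. -/
def KKTF (f : Em m → ℝ) (g : Em m → Mat n) (z : Em m × Mat n) : Em m × Mat n :=
  (gradient f z.1 + gradg g z.1 z.2, - g z.1 + piPlus (Gmap g z))

/-- The lifted stratum `M̃_{p,q} = {z = (x,y) ∈ ℝᵐ × Sⁿ : G(z) ∈ M_{p,q}}`. -/
def lstratum (g : Em m → Mat n) (p q : ℕ) : Set (Em m × Mat n) :=
  {z | z.2.IsSymm ∧ Gmap g z ∈ stratum n p q}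

/-- The norm `‖(u,H)‖ = sqrt(‖u‖² + ‖H‖²)` on `ℝᵐ × Sⁿ` (Frobenius norm on matrices). -/
def pnorm {m n : ℕ} (w : Em m × Mat n) : ℝ := Real.sqrt (‖w.1‖ ^ 2 + ‖w.2‖ ^ 2)

/-- The weak strict Robinson constraint qualification (W-SRCQ) at `z`:
`g'(x)[ℝᵐ] + {PBPᵀ : B ∈ Sⁿ, B_{βγ} = 0, B_{γγ} = 0} = Sⁿ`
(for any eigenvalue decomposition `(P, lam)` of `G(z)`; independent of the choice). -/
def WSRCQ (g : Em m → Mat n) (z : Em m × Mat n) : Prop :=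
  ∀ P lam, IsEigDecomp (Gmap g z) P lam →
    ∀ C : Mat n, C.IsSymm →
      ∃ (v : Em m) (B : Mat n), B.IsSymm ∧
        (∀ i j, lam i = 0 → lam j < 0 → B i j = 0) ∧
        (∀ i j, lam i < 0 → lam j < 0 → B i j = 0) ∧
        C = fderiv ℝ g z.1 v + P * B * Pᵀ

/-- The constraint nondegeneracy at `z`:
`g'(x)[ℝᵐ] + {PBPᵀ : B ∈ Sⁿ, B_{ββ} = 0, B_{βγ} = 0, B_{γγ} = 0} = Sⁿ`. -/
def CNondeg (g : Em m → Mat n) (z : Em m × Mat n) : Prop :=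
  ∀ P lam, IsEigDecomp (Gmap g z) P lam →
    ∀ C : Mat n, C.IsSymm →
      ∃ (v : Em m) (B : Mat n), B.IsSymm ∧
        (∀ i j, lam i = 0 → lam j = 0 → B i j = 0) ∧
        (∀ i j, lam i = 0 → lam j < 0 → B i j = 0) ∧
        (∀ i j, lam i < 0 → lam j < 0 → B i j = 0) ∧
        C = fderiv ℝ g z.1 v + P * B * Pᵀ

/-- The strict Robinson constraint qualification (SRCQ) at a KKT pair `z`:
`g'(x)[ℝᵐ] + {PBPᵀ : B ∈ Sⁿ, B_{ββ} ⪰ 0, B_{βγ} = 0, B_{γγ} = 0} = Sⁿ`. -/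
def SRCQ (g : Em m → Mat n) (z : Em m × Mat n) : Prop :=
  ∀ P lam, IsEigDecomp (Gmap g z) P lam →
    ∀ C : Mat n, C.IsSymm →
      ∃ (v : Em m) (B : Mat n), B.IsSymm ∧
        (∀ u : Fin n → ℝ, (∀ i, lam i ≠ 0 → u i = 0) →
          0 ≤ ∑ i, ∑ j, u i * B i j * u j) ∧
        (∀ i j, lam i = 0 → lam j < 0 → B i j = 0) ∧
        (∀ i j, lam i < 0 → lam j < 0 → B i j = 0) ∧
        C = fderiv ℝ g z.1 v + P * B * Pᵀ

/-- The quadratic form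
`Q(z,v) = ⟨v, ∇²ₓₓL(x,y)v⟩ + 2·Σ_{i∈α}Σ_{j∈γ} (−λⱼ/λᵢ)·([Pᵀ(g'(x)v)P]_{ij})²`. -/
def Qform (f : Em m → ℝ) (g : Em m → Mat n) (z : Em m × Mat n)
    (P : Mat n) (lam : Fin n → ℝ) (v : Em m) : ℝ :=
  ⟪v, hessL f g z.1 z.2 v⟫ +
    2 * ∑ i : Fin n, ∑ j : Fin n,
      (if 0 < lam i ∧ lam j < 0 then
        (-lam j / lam i) * ((Pᵀ * fderiv ℝ g z.1 v * P) i j) ^ 2 else 0)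

/-- `v ∈ appl(z)`: the blocks `ββ`, `βγ`, `γγ` of `Pᵀ(g'(x)v)P` vanish. -/
def memAppl (g : Em m → Mat n) (z : Em m × Mat n)
    (P : Mat n) (lam : Fin n → ℝ) (v : Em m) : Prop :=
  (∀ i j, lam i = 0 → lam j = 0 → (Pᵀ * fderiv ℝ g z.1 v * P) i j = 0) ∧
  (∀ i j, lam i = 0 → lam j < 0 → (Pᵀ * fderiv ℝ g z.1 v * P) i j = 0) ∧
  (∀ i j, lam i < 0 → lam j < 0 → (Pᵀ * fderiv ℝ g z.1 v * P) i j = 0)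

/-- `v ∈ app(z)`: the blocks `βγ`, `γγ` of `Pᵀ(g'(x)v)P` vanish. -/
def memApp (g : Em m → Mat n) (z : Em m × Mat n)
    (P : Mat n) (lam : Fin n → ℝ) (v : Em m) : Prop :=
  (∀ i j, lam i = 0 → lam j < 0 → (Pᵀ * fderiv ℝ g z.1 v * P) i j = 0) ∧
  (∀ i j, lam i < 0 → lam j < 0 → (Pᵀ * fderiv ℝ g z.1 v * P) i j = 0)

/-- The weak second order condition (W-SOC) at `z`: `Q(z,v) ≠ 0` for every nonzero
`v ∈ appl(z)`. -/
def WSOC (f : Em m → ℝ) (g : Em m → Mat n) (z : Em m × Mat n) : Prop :=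
  ∀ P lam, IsEigDecomp (Gmap g z) P lam →
    ∀ v : Em m, v ≠ 0 → memAppl g z P lam v → Qform f g z P lam v ≠ 0

/-- The strong second order sufficient condition (S-SOSC) at `z`: `Q(z,v) > 0` for every
nonzero `v ∈ app(z)`. -/
def SSOSC (f : Em m → ℝ) (g : Em m → Mat n) (z : Em m × Mat n) : Prop :=
  ∀ P lam, IsEigDecomp (Gmap g z) P lam →
    ∀ v : Em m, v ≠ 0 → memApp g z P lam v → 0 < Qform f g z P lam v

/-- The second order necessary condition (SONC) at `z`. -/
def SONC (f : Em m → ℝ) (g : Em m → Mat n) (z : Em m × Mat n) : Prop :=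
  ∀ P lam, IsEigDecomp (Gmap g z) P lam →
    ∀ v : Em m, v ≠ 0 →
      (∀ u : Fin n → ℝ, (∀ i, lam i ≠ 0 → u i = 0) →
        0 ≤ ∑ i, ∑ j, u i * (Pᵀ * fderiv ℝ g z.1 v * P) i j * u j) →
      memApp g z P lam v → 0 ≤ Qform f g z P lam v

/-- The W-SOC holds uniformly on a set `S`: there is `c > 0` with `Q(z,v) ≥ c‖v‖²` for
every `z ∈ S` (in `ℝᵐ × Sⁿ`) and every `v ∈ appl(z)`. -/
def UnifWSOC (f : Em m → ℝ) (g : Em m → Mat n) (S : Set (Em m × Mat n)) : Prop :=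
  ∃ c : ℝ, 0 < c ∧ ∀ z ∈ S, z.2.IsSymm →
    ∀ P lam, IsEigDecomp (Gmap g z) P lam →
      ∀ v : Em m, memAppl g z P lam v → c * ‖v‖ ^ 2 ≤ Qform f g z P lam v

/-- `H ∈ T_z`: `H ∈ Sⁿ` with `(PᵀHP)_{ββ} = 0`. -/
def memTz {n : ℕ} (P : Mat n) (lam : Fin n → ℝ) (H : Mat n) : Prop :=
  H.IsSymm ∧ ∀ i j, lam i = 0 → lam j = 0 → (Pᵀ * H * P) i j = 0

/-- `Δ ∈ N_{G(z)}M_{p,q}`: `Δ ∈ Sⁿ` and `(PᵀΔP)_{ij} = 0` whenever `i ∉ β` or `j ∉ β`. -/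
def memNormal {n : ℕ} (P : Mat n) (lam : Fin n → ℝ) (Δ : Mat n) : Prop :=
  Δ.IsSymm ∧ ∀ i j, (lam i ≠ 0 ∨ lam j ≠ 0) → (Pᵀ * Δ * P) i j = 0

/-- The map `ξ_z : T_z → Sⁿ`, `ξ_z(H) = P·M·Pᵀ`. -/
def xiMap {n : ℕ} (P : Mat n) (lam : Fin n → ℝ) (H : Mat n) : Mat n :=
  P * (Matrix.of fun i j =>
    if 0 < lam i ∧ 0 < lam j then (Pᵀ * H * P) i j
    else if 0 < lam i ∧ lam j = 0 then (Pᵀ * H * P) i j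
    else if lam i = 0 ∧ 0 < lam j then (Pᵀ * H * P) i j
    else if 0 < lam i ∧ lam j < 0 then (lam i / (lam i - lam j)) * (Pᵀ * H * P) i j
    else if lam i < 0 ∧ 0 < lam j then (lam j / (lam j - lam i)) * (Pᵀ * H * P) i j
    else 0) * Pᵀ

/-- The linear map `𝒜_z(v,H) = (∇²ₓₓL(x,y)v − ∇g(x)(g'(x)v) + ∇g(x)H, −g'(x)v + ξ_z(H))`. -/
def Amap (f : Em m → ℝ) (g : Em m → Mat n) (z : Em m × Mat n)
    (P : Mat n) (lam : Fin n → ℝ) (v : Em m) (H : Mat n) : Em m × Mat n :=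
  (hessL f g z.1 z.2 v - gradg g z.1 (fderiv ℝ g z.1 v) + gradg g z.1 H,
    - fderiv ℝ g z.1 v + xiMap P lam H)

/-- The positive inertia index of `A` is `p`. -/
def posInertiaIs {n : ℕ} (A : Mat n) (p : ℕ) : Prop :=
  ∃ P lam, IsEigDecomp A P lam ∧ {i : Fin n | 0 < lam i}.ncard = p

/-- The negative inertia index of `A` is `q`. -/
def negInertiaIs {n : ℕ} (A : Mat n) (q : ℕ) : Prop :=
  ∃ P lam, IsEigDecomp A P lam ∧ {i : Fin n | lam i < 0}.ncard = q

end

/-!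
(c) ⇒ (a): replacing `ȳ` by `ȳ - ε·P·Diag(1_β)·Pᵀ` turns the zero eigenvalues of `G(z̄)` into
`-ε` and keeps `P` as an eigenvector matrix, so the W-SRCQ there makes `B` vanish on the whole
`(β ∪ γ) × (β ∪ γ)` block, which is constraint nondegeneracy at `z̄`.

(a) ⇒ (b): at a decomposition `(P, λ)` of `G(z)`, constraint nondegeneracy says that
`g'(x)[ℝᵐ] + P·{B : B = 0 on the nonpositive block}·Pᵀ + {skew matrices}` is all of `ℝⁿˣⁿ`;
if it fails, a unit matrix `D` is orthogonal to this span. Along failures `z_k → z̄`, compactness of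
the orthogonal group and of the unit sphere gives limits `P̄`, `D̄`, and `G(z̄) = P̄·Diag(μ)·P̄ᵀ`.
Since positive eigenvalues stay positive nearby, `D̄` is orthogonal to the span at `z̄`, which is
everything: a contradiction. So constraint nondegeneracy is an open condition, and it implies the
W-SRCQ.
-/

noncomputable section

variable {m n : ℕ}

open Filter Topology

-- `Matrix` carries the product topology, but instance search does not look through it.
instance : FirstCountableTopology (Mat n) :=
  inferInstanceAs (FirstCountableTopology (Fin n → Fin n → ℝ))

lemma minner_eq_sum (A B : Mat n) : minner A B = ∑ i, ∑ j, A i j * B i j := by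
  simp only [minner, Matrix.trace, Matrix.diag, Matrix.mul_apply, Matrix.transpose_apply]
  exact Finset.sum_comm

lemma minner_self_eq_zero {D : Mat n} : minner D D = 0 ↔ D = 0 := by
  simpa [minner] using Matrix.trace_conjTranspose_mul_self_eq_zero_iff (A := D)

def minnerL (D : Mat n) : Mat n →ₗ[ℝ] ℝ :=
  (Matrix.traceLinearMap (Fin n) ℝ ℝ).comp (LinearMap.mulLeft ℝ Dᵀ)

@[simp] lemma minnerL_apply (D X : Mat n) : minnerL D X = minner D X := rfl

lemma exists_minnerL_eq (f : Mat n →ₗ[ℝ] ℝ) : ∃ D, minnerL D = f := by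
  refine ⟨Matrix.of fun i j => f (Matrix.single i j 1), LinearMap.ext fun X => ?_⟩
  conv_rhs => rw [Matrix.matrix_eq_sum_single X]
  have hsingle : ∀ (i j : Fin n) (c : ℝ), Matrix.single i j c = c • Matrix.single i j 1 := by
    simp [Matrix.smul_single]
  simp only [minnerL_apply, minner_eq_sum, map_sum, Matrix.of_apply]
  simp_rw [hsingle _ _ (X _ _), map_smul, smul_eq_mul, mul_comm]

lemma isClosed_setOf_isOrthoMat : IsClosed {P : Mat n | IsOrthoMat P} :=
  (isClosed_eq (by fun_prop) continuous_const).inter (isClosed_eq (by fun_prop) continuous_const)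

lemma IsOrthoMat.norm_entry_le {P : Mat n} (hP : IsOrthoMat P) (i j : Fin n) : ‖P i j‖ ≤ 1 :=
  entry_norm_bound_of_unitary (Matrix.mem_unitaryGroup_iff.2 hP.1) i j

lemma isCompact_setOf_isOrthoMat : IsCompact {P : Mat n | IsOrthoMat P} := by
  have hcube : IsCompact (Set.univ.pi fun _ : Fin n => Set.univ.pi fun _ : Fin n =>
      Metric.closedBall (0 : ℝ) 1) :=
    isCompact_univ_pi fun _ => isCompact_univ_pi fun _ => isCompact_closedBall 0 1
  refine hcube.of_isClosed_subset isClosed_setOf_isOrthoMat fun P hP i _ j _ => ?_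
  simpa using hP.norm_entry_le i j

lemma isClosed_setOf_isEigDecomp :
    IsClosed {t : Mat n × Mat n × (Fin n → ℝ) | IsEigDecomp t.1 t.2.1 t.2.2} :=
  (isClosed_setOf_isOrthoMat.preimage (by fun_prop)).inter
    ((isClosed_antitone.preimage (by fun_prop)).inter (isClosed_eq (by fun_prop) (by fun_prop)))

lemma IsEigDecomp.eq_diag {A P : Mat n} {lam : Fin n → ℝ} (h : IsEigDecomp A P lam) :
    lam = (Pᵀ * A * P).diag := by
  obtain ⟨⟨-, hP⟩, -, rfl⟩ := h
  ext i
  simp [Matrix.mul_assoc, ← Matrix.mul_assoc Pᵀ P, hP]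

lemma isSymm_fderiv {g : Em m → Mat n} (hgs : ∀ x, (g x).IsSymm) (x v : Em m) :
    (fderiv ℝ g x v).IsSymm := by
  let T : Mat n ≃L[ℝ] Mat n :=
    (Matrix.transposeLinearEquiv (Fin n) (Fin n) ℝ ℝ).toContinuousLinearEquiv
  have hTg : T ∘ g = g := funext hgs
  have hT : fderiv ℝ (T ∘ g) x = (T : Mat n →L[ℝ] Mat n).comp (fderiv ℝ g x) := T.comp_fderiv
  calc (fderiv ℝ g x v)ᵀ = fderiv ℝ (T ∘ g) x v := by rw [hT]; rfl
    _ = fderiv ℝ g x v := by rw [hTg]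

def nonposBlockZero (lam : Fin n → ℝ) : Submodule ℝ (Mat n) where
  carrier := {B | ∀ i j, lam i ≤ 0 → lam j ≤ 0 → B i j = 0}
  add_mem' hA hB i j hi hj := by simp [hA i j hi hj, hB i j hi hj]
  zero_mem' _ _ _ _ := rfl
  smul_mem' c _ hB i j hi hj := by simp [hB i j hi hj]

lemma transpose_mem_nonposBlockZero {lam : Fin n → ℝ} {B : Mat n}
    (hB : B ∈ nonposBlockZero lam) : Bᵀ ∈ nonposBlockZero lam :=
  fun i j hi hj => hB j i hj hi

def conjL (P : Mat n) : Mat n →ₗ[ℝ] Mat n :=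
  (LinearMap.mulRight ℝ Pᵀ).comp (LinearMap.mulLeft ℝ P)

@[simp] lemma conjL_apply (P B : Mat n) : conjL P B = P * B * Pᵀ := rfl

def skewL : Mat n →ₗ[ℝ] Mat n :=
  LinearMap.id - (Matrix.transposeLinearEquiv (Fin n) (Fin n) ℝ ℝ).toLinearMap

@[simp] lemma skewL_apply (K : Mat n) : skewL K = K - Kᵀ := rfl

-- The skew part makes this span everything exactly when it contains every symmetric matrix.
def nondegSpan (g : Em m → Mat n) (x : Em m) (P : Mat n) (lam : Fin n → ℝ) : Submodule ℝ (Mat n) :=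
  LinearMap.range (fderiv ℝ g x : Em m →ₗ[ℝ] Mat n) ⊔ (nonposBlockZero lam).map (conjL P) ⊔
    LinearMap.range skewL

def IsNondegAt (g : Em m → Mat n) (x : Em m) (P : Mat n) (lam : Fin n → ℝ) : Prop :=
  ∀ C : Mat n, C.IsSymm →
    ∃ (v : Em m) (B : Mat n), B.IsSymm ∧ B ∈ nonposBlockZero lam ∧ C = fderiv ℝ g x v + P * B * Pᵀ

lemma CNondeg_iff {g : Em m → Mat n} {z : Em m × Mat n} :
    CNondeg g z ↔ ∀ P lam, IsEigDecomp (Gmap g z) P lam → IsNondegAt g z.1 P lam := by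
  refine forall₂_congr fun P lam => imp_congr_right fun _ => forall₂_congr fun C _ => ?_
  refine exists₂_congr fun v B => ?_
  constructor
  · rintro ⟨hB, h00, h0n, hnn, hC⟩
    refine ⟨hB, fun i j hi hj => ?_, hC⟩
    rcases hi.lt_or_eq with hi | hi <;> rcases hj.lt_or_eq with hj | hj
    · exact hnn i j hi hj
    · exact (hB.apply j i).trans (h0n j i hj hi)
    · exact h0n i j hi hj
    · exact h00 i j hi hj
  · rintro ⟨hB, hB0, hC⟩
    exact ⟨hB, fun i j hi hj => hB0 i j hi.le hj.le, fun i j hi hj => hB0 i j hi.le hj.le,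
      fun i j hi hj => hB0 i j hi.le hj.le, hC⟩

lemma isNondegAt_iff_nondegSpan_eq_top {g : Em m → Mat n} (hgs : ∀ x, (g x).IsSymm) {x : Em m}
    {P : Mat n} {lam : Fin n → ℝ} : IsNondegAt g x P lam ↔ nondegSpan g x P lam = ⊤ := by
  constructor
  · intro h
    refine eq_top_iff.2 fun X _ => ?_
    have hC : ((1 / 2 : ℝ) • (X + Xᵀ)).IsSymm := by
      simp [Matrix.IsSymm, Matrix.transpose_add, add_comm]
    obtain ⟨v, B, -, hB, hXC⟩ := h _ hC
    have hX : X = fderiv ℝ g x v + conjL P B + skewL ((1 / 2 : ℝ) • X) := by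
      rw [conjL_apply, skewL_apply, ← hXC, Matrix.transpose_smul]
      module
    rw [hX]
    exact add_mem (add_mem (Submodule.mem_sup_left (Submodule.mem_sup_left ⟨v, rfl⟩))
      (Submodule.mem_sup_left (Submodule.mem_sup_right (Submodule.mem_map_of_mem hB))))
      (Submodule.mem_sup_right ⟨_, rfl⟩)
  · intro h C hC
    have hmem : C ∈ nondegSpan g x P lam := h ▸ Submodule.mem_top
    obtain ⟨Y, hY, _, ⟨K, rfl⟩, hYK⟩ := Submodule.mem_sup.1 hmem
    obtain ⟨_, ⟨v, rfl⟩, _, ⟨B, hB, rfl⟩, rfl⟩ := Submodule.mem_sup.1 hY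
    simp only [conjL_apply, skewL_apply] at hYK
    refine ⟨v, (1 / 2 : ℝ) • (B + Bᵀ), ?_, ?_, ?_⟩
    · simp [Matrix.IsSymm, Matrix.transpose_add, add_comm]
    · exact Submodule.smul_mem _ _ (add_mem hB (transpose_mem_nonposBlockZero hB))
    · have hT : C = fderiv ℝ g x v + P * Bᵀ * Pᵀ - (K - Kᵀ) := by
        conv_lhs => rw [← hC, ← hYK]
        simp [Matrix.transpose_add, Matrix.transpose_mul, Matrix.transpose_sub,
          (isSymm_fderiv hgs x v).eq, Matrix.mul_assoc]
        abel
      rw [Matrix.mul_smul, Matrix.smul_mul, Matrix.mul_add, Matrix.add_mul]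
      linear_combination (norm := module) (1 / 2 : ℝ) • hYK.symm + (1 / 2 : ℝ) • hT

lemma exists_norm_eq_one_le_ker_minnerL {W : Submodule ℝ (Mat n)} (hW : W ≠ ⊤) :
    ∃ D : Mat n, ‖D‖ = 1 ∧ W ≤ LinearMap.ker (minnerL D) := by
  obtain ⟨f, hf, hWf⟩ := W.exists_le_ker_of_lt_top hW.lt_top
  obtain ⟨D, rfl⟩ := exists_minnerL_eq f
  have hD : D ≠ 0 := by rintro rfl; exact hf (LinearMap.ext fun X => by simp [minner])
  refine ⟨‖D‖⁻¹ • D, by simp [norm_smul, hD], hWf.trans fun X hX => ?_⟩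
  simp_all [minner, Matrix.transpose_smul]

lemma eq_zero_of_ker_minnerL_eq_top {D : Mat n} (h : LinearMap.ker (minnerL D) = ⊤) : D = 0 :=
  minner_self_eq_zero.1 (by simpa using LinearMap.congr_fun (LinearMap.ker_eq_top.1 h) D)

lemma tendsto_minner (D₀ X₀ : Mat n) :
    Tendsto (fun p : Mat n × Mat n => minner p.1 p.2) (𝓝 (D₀, X₀)) (𝓝 (minner D₀ X₀)) :=
  Continuous.tendsto (by unfold minner; fun_prop) _

lemma minner_eq_zero_of_tendsto {ι : Type*} {l : Filter ι} [l.NeBot] {D X : ι → Mat n}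
    {D₀ X₀ : Mat n} (hD : Tendsto D l (𝓝 D₀)) (hX : Tendsto X l (𝓝 X₀))
    (h : ∀ᶠ k in l, minner (D k) (X k) = 0) : minner D₀ X₀ = 0 := by
  have hlim := (tendsto_minner D₀ X₀).comp (hD.prodMk_nhds hX)
  exact tendsto_nhds_unique hlim (tendsto_const_nhds.congr' (h.mono fun _ hk => hk.symm))

lemma eventually_nonposBlockZero_le {ι : Type*} {l : Filter ι} {lam : ι → Fin n → ℝ}
    {μ : Fin n → ℝ} (h : Tendsto lam l (𝓝 μ)) :
    ∀ᶠ k in l, nonposBlockZero μ ≤ nonposBlockZero (lam k) := by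
  have hpos : ∀ᶠ k in l, ∀ i, 0 < μ i → 0 < lam k i := eventually_all.2 fun i => by
    by_cases hi : 0 < μ i
    · exact ((tendsto_pi_nhds.1 h i).eventually (lt_mem_nhds hi)).mono fun _ hk _ => hk
    · exact Eventually.of_forall fun _ h => absurd h hi
  filter_upwards [hpos] with k hk B hB i j hi hj
  exact hB i j (not_lt.1 fun h => hi.not_gt (hk i h)) (not_lt.1 fun h => hj.not_gt (hk j h))

lemma IsEigDecomp.exists_tendsto {ι : Type*} {l : Filter ι} [l.NeBot] {A P : ι → Mat n}
    {lam : ι → Fin n → ℝ} {A₀ P₀ : Mat n} (hdec : ∀ k, IsEigDecomp (A k) (P k) (lam k))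
    (hA : Tendsto A l (𝓝 A₀)) (hP : Tendsto P l (𝓝 P₀)) :
    ∃ μ, Tendsto lam l (𝓝 μ) ∧ IsEigDecomp A₀ P₀ μ := by
  have hdiag : Tendsto (fun p : Mat n × Mat n => (p.2ᵀ * p.1 * p.2).diag)
      (𝓝 (A₀, P₀)) (𝓝 (P₀ᵀ * A₀ * P₀).diag) :=
    Continuous.tendsto (by fun_prop) _
  have hlam : Tendsto lam l (𝓝 (P₀ᵀ * A₀ * P₀).diag) := by
    have h := hdiag.comp (hA.prodMk_nhds hP)
    rwa [funext fun k => (hdec k).eq_diag]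
  exact ⟨_, hlam, isClosed_setOf_isEigDecomp.mem_of_tendsto
    (hA.prodMk_nhds (hP.prodMk_nhds hlam)) (Eventually.of_forall hdec)⟩

lemma nondegSpan_le_ker_of_tendsto {ι : Type*} {l : Filter ι} [l.NeBot] {g : Em m → Mat n}
    (hg : ContDiff ℝ 1 g) {x : ι → Em m} {P D : ι → Mat n} {lam : ι → Fin n → ℝ}
    {x₀ : Em m} {P₀ D₀ : Mat n} {μ : Fin n → ℝ} (hx : Tendsto x l (𝓝 x₀))
    (hP : Tendsto P l (𝓝 P₀)) (hlam : Tendsto lam l (𝓝 μ)) (hD : Tendsto D l (𝓝 D₀))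
    (h : ∀ k, nondegSpan g (x k) (P k) (lam k) ≤ LinearMap.ker (minnerL (D k))) :
    nondegSpan g x₀ P₀ μ ≤ LinearMap.ker (minnerL D₀) := by
  have hmem : ∀ {X : ι → Mat n} {X₀ : Mat n}, Tendsto X l (𝓝 X₀) →
      (∀ᶠ k in l, X k ∈ nondegSpan g (x k) (P k) (lam k)) → X₀ ∈ LinearMap.ker (minnerL D₀) :=
    fun hX hXmem => minner_eq_zero_of_tendsto hD hX (hXmem.mono fun k hk => h k hk)
  refine sup_le (sup_le ?_ ?_) ?_
  · rintro _ ⟨v, rfl⟩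
    have hg' : Continuous fun y => fderiv ℝ g y v :=
      (hg.continuous_fderiv one_ne_zero).clm_apply continuous_const
    exact hmem ((hg'.tendsto x₀).comp hx) (Eventually.of_forall fun k =>
      Submodule.mem_sup_left (Submodule.mem_sup_left ⟨v, rfl⟩))
  · rintro _ ⟨B, hB, rfl⟩
    have hconj : Tendsto (fun k => conjL (P k) B) l (𝓝 (conjL P₀ B)) := by
      simp only [conjL_apply]
      exact ((continuous_id.matrix_mul continuous_const).matrix_mul
        continuous_id.matrix_transpose).tendsto P₀ |>.comp hP
    refine hmem hconj ((eventually_nonposBlockZero_le hlam).mono fun k hk => ?_)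
    exact Submodule.mem_sup_left (Submodule.mem_sup_right (Submodule.mem_map_of_mem (hk hB)))
  · rintro _ ⟨K, rfl⟩
    exact hmem tendsto_const_nhds (Eventually.of_forall fun k => Submodule.mem_sup_right ⟨K, rfl⟩)

theorem CNondeg.eventually_nhds {g : Em m → Mat n} (hg : ContDiff ℝ 1 g)
    (hgs : ∀ x, (g x).IsSymm) {zbar : Em m × Mat n} (h : CNondeg g zbar) :
    ∀ᶠ z in 𝓝 zbar, CNondeg g z := by
  by_contra hfreq
  obtain ⟨z, hz, hnot⟩ := exists_seq_forall_of_frequently (not_eventually.1 hfreq)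
  have hcert : ∀ k, ∃ P lam D, IsEigDecomp (Gmap g (z k)) P lam ∧ ‖D‖ = 1 ∧
      nondegSpan g (z k).1 P lam ≤ LinearMap.ker (minnerL D) := fun k => by
    obtain ⟨P, lam, hdec, hnd⟩ : ∃ P lam, IsEigDecomp (Gmap g (z k)) P lam ∧
        ¬IsNondegAt g (z k).1 P lam := by simpa [CNondeg_iff] using hnot k
    obtain ⟨D, hD, hker⟩ := exists_norm_eq_one_le_ker_minnerL
      (mt (isNondegAt_iff_nondegSpan_eq_top hgs).2 hnd)
    exact ⟨P, lam, D, hdec, hD, hker⟩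
  choose P lam D hdec hD hker using hcert
  obtain ⟨⟨P₀, D₀⟩, ⟨-, hD₀⟩, φ, hφ, hlim⟩ :=
    (isCompact_setOf_isOrthoMat.prod (isCompact_sphere (0 : Mat n) 1)).tendsto_subseq
      (x := fun k => (P k, D k)) fun k => ⟨(hdec k).1, by simpa using hD k⟩
  have hzφ := hz.comp hφ.tendsto_atTop
  have hGφ : Tendsto (fun k => Gmap g (z (φ k))) atTop (𝓝 (Gmap g zbar)) :=
    (((hg.continuous.comp continuous_fst).add continuous_snd).tendsto zbar).comp hzφ
  obtain ⟨μ, hμ, hdec₀⟩ := IsEigDecomp.exists_tendsto (fun k => hdec (φ k)) hGφ (hlim.fst_nhds)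
  have hker₀ := nondegSpan_le_ker_of_tendsto hg ((continuous_fst.tendsto zbar).comp hzφ)
    hlim.fst_nhds hμ hlim.snd_nhds fun k => hker (φ k)
  rw [(isNondegAt_iff_nondegSpan_eq_top hgs).1 (CNondeg_iff.1 h P₀ μ hdec₀), top_le_iff] at hker₀
  have hD₀0 : D₀ = 0 := eq_zero_of_ker_minnerL_eq_top hker₀
  simp [hD₀0] at hD₀

lemma CNondeg.WSRCQ {g : Em m → Mat n} {z : Em m × Mat n} (h : CNondeg g z) : WSRCQ g z :=
  fun P lam hdec C hC =>
    let ⟨v, B, hB, _, h0n, hnn, hCeq⟩ := h P lam hdec C hC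
    ⟨v, B, hB, h0n, hnn, hCeq⟩

lemma IsEigDecomp.sub_smul_kernelProj {A P : Mat n} {lam : Fin n → ℝ} (h : IsEigDecomp A P lam)
    {ε : ℝ} (hε : 0 ≤ ε) (hneg : ∀ i, lam i < 0 → lam i ≤ -ε) :
    IsEigDecomp (A - ε • (P * diagonal (fun i => if lam i = 0 then 1 else 0) * Pᵀ)) P
      (fun i => if lam i = 0 then -ε else lam i) := by
  obtain ⟨hP, hanti, rfl⟩ := h
  refine ⟨hP, fun i j hij => ?_, ?_⟩
  · have hle := hanti hij
    dsimp only
    split_ifs with hj hi hi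
    · exact le_rfl
    · linarith
    · exact hneg j (lt_of_le_of_ne (hle.trans hi.le) hj)
    · exact hle
  · have hdiag : diagonal (fun i => if lam i = 0 then -ε else lam i) =
        diagonal lam - ε • diagonal (fun i => if lam i = 0 then 1 else 0) := by
      ext i j
      rcases eq_or_ne i j with rfl | hij
      · by_cases hi : lam i = 0 <;> simp [hi]
      · simp [hij]
    rw [hdiag, Matrix.mul_sub, Matrix.sub_mul, Matrix.mul_smul, Matrix.smul_mul]

theorem CNondeg_of_eventually_WSRCQ {g : Em m → Mat n} {zbar : Em m × Mat n}
    (hsym : zbar.2.IsSymm) (h : ∀ᶠ y in 𝓝 zbar.2, y.IsSymm → WSRCQ g (zbar.1, y)) :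
    CNondeg g zbar := by
  refine CNondeg_iff.2 fun P lam hdec C hC => ?_
  set E := P * diagonal (fun i => if lam i = 0 then (1 : ℝ) else 0) * Pᵀ
  have hE : E.IsSymm := by simp [E, Matrix.IsSymm, Matrix.transpose_mul, Matrix.mul_assoc]
  have hpath : Tendsto (fun ε : ℝ => zbar.2 - ε • E) (𝓝[>] 0) (𝓝 zbar.2) := by
    have h0 := (Continuous.tendsto (f := fun ε : ℝ => zbar.2 - ε • E) (by fun_prop) 0)
    simpa using h0.mono_left nhdsWithin_le_nhds
  have hsmall : ∀ᶠ ε in 𝓝[>] (0 : ℝ), ∀ i, lam i < 0 → lam i ≤ -ε := eventually_all.2 fun i => by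
    by_cases hi : lam i < 0
    · exact nhdsWithin_le_nhds ((eventually_lt_nhds (neg_pos.2 hi)).mono fun _ hε _ => by linarith)
    · exact Eventually.of_forall fun _ h => absurd h hi
  obtain ⟨ε, hW, hneg, hε⟩ :=
    ((hpath.eventually h).and (hsmall.and self_mem_nhdsWithin)).exists
  have hG : Gmap g (zbar.1, zbar.2 - ε • E) = Gmap g zbar - ε • E := (add_sub_assoc _ _ _).symm
  obtain ⟨v, B, hB, -, hBneg, hCeq⟩ := hW (hsym.sub (hE.smul ε)) P _
    (hG ▸ hdec.sub_smul_kernelProj (le_of_lt hε) hneg) C hC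
  have hshift : ∀ i, lam i ≤ 0 → (if lam i = 0 then -ε else lam i) < 0 := fun i hi => by
    split_ifs with h0
    · exact neg_neg_of_pos hε
    · exact lt_of_le_of_ne hi h0
  exact ⟨v, B, hB, fun i j hi hj => hBneg i j (hshift i hi) (hshift j hj), hCeq⟩
end

/-- Constraint nondegeneracy at `z̄` is equivalent to the local collective
validity of the W-SRCQ: (a) ↔ (b) and (a) ↔ (c). -/
theorem CNondeg_iff_local_WSRCQ {m n : ℕ}
    (g : Em m → Mat n)
    (hg : ContDiff ℝ 2 g) (hgs : ∀ x, (g x).IsSymm)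
    (zbar : Em m × Mat n) (hsym : zbar.2.IsSymm) :
    (CNondeg g zbar ↔
      ∃ U : Set (Em m × Mat n), IsOpen U ∧ zbar ∈ U ∧
        ∀ z ∈ U, z.2.IsSymm → WSRCQ g z) ∧
    (CNondeg g zbar ↔
      ∃ V : Set (Mat n), IsOpen V ∧ zbar.2 ∈ V ∧
        ∀ y ∈ V, y.IsSymm → WSRCQ g (zbar.1, y)) := by
  have hab : CNondeg g zbar →
      ∃ U : Set (Em m × Mat n), IsOpen U ∧ zbar ∈ U ∧ ∀ z ∈ U, z.2.IsSymm → WSRCQ g z := by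
    intro h
    obtain ⟨U, hU, hUo, hzU⟩ :=
      eventually_nhds_iff.1 (h.eventually_nhds (hg.of_le (by norm_num)) hgs)
    exact ⟨U, hUo, hzU, fun z hz _ => (hU z hz).WSRCQ⟩
  have hbc : (∃ U : Set (Em m × Mat n), IsOpen U ∧ zbar ∈ U ∧ ∀ z ∈ U, z.2.IsSymm → WSRCQ g z) →
      ∃ V : Set (Mat n), IsOpen V ∧ zbar.2 ∈ V ∧ ∀ y ∈ V, y.IsSymm → WSRCQ g (zbar.1, y) :=
    fun ⟨U, hUo, hzU, hU⟩ => ⟨{y | (zbar.1, y) ∈ U}, hUo.preimage (Continuous.prodMk_right _),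
      hzU, fun y hy => hU _ hy⟩
  have hca : (∃ V : Set (Mat n), IsOpen V ∧ zbar.2 ∈ V ∧
      ∀ y ∈ V, y.IsSymm → WSRCQ g (zbar.1, y)) → CNondeg g zbar :=
    fun ⟨V, hVo, hyV, hV⟩ =>
      CNondeg_of_eventually_WSRCQ hsym (Filter.eventually_of_mem (hVo.mem_nhds hyV) hV)
  exact ⟨⟨hab, hca ∘ hbc⟩, hbc ∘ hab, hca⟩
end

section
/- Let U ⊆ ℝ^m × S^n be open and let p,q ≥ 0 with p+q ≤ n. If the W-SRCQ holds at every z ∈ U ∩ M̃_{p,q}, then for every integer q' with 0 ≤ q' ≤ q the W-SRCQ holds at every z ∈ U ∩ M̃_{p,q'}. -/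
open scoped Classical RealInnerProductSpace
open Matrix Set

/-!
Write `G(z) = P·Diag(λ)·Pᵀ` with inertia `(p, q')`, `q' ≤ q`. As `λ` is nonincreasing and
`p + q ≤ n`, its last `q` entries are `≤ 0`, and lowering them by a small `t > 0` (a change of `y`
alone) yields a point `z_t ∈ U` with `G(z_t) = P·Diag(λ_t)·Pᵀ` of inertia `(p, q)`. Since
`λ_t ≤ λ`, every index in `β(λ) ∪ γ(λ)` lies in `β(λ_t) ∪ γ(λ_t)` and `γ(λ) ⊆ γ(λ_t)`, so the
matrices `B` admitted by the W-SRCQ at `z_t` are admitted at `z`, while `g'(x)` is unchanged.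
The eigenvalue vector of `G(z)` is determined by its characteristic polynomial, so this covers
every decomposition of `G(z)`.
-/

section IsEigDecomp

open Polynomial

variable {n : ℕ} {A P P' : Mat n} {lam lam' : Fin n → ℝ}

theorem IsEigDecomp.charpoly_eq (h : IsEigDecomp A P lam) :
    A.charpoly = ∏ i, (X - C (lam i)) := by
  obtain ⟨⟨-, hPtP⟩, -, rfl⟩ := h
  rw [charpoly_mul_comm, ← Matrix.mul_assoc, hPtP, Matrix.one_mul, charpoly_diagonal]

theorem IsEigDecomp.roots_charpoly (h : IsEigDecomp A P lam) :
    A.charpoly.roots = Finset.univ.val.map lam := by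
  rw [h.charpoly_eq, Finset.prod_eq_multiset_prod]
  exact Multiset.map_map (fun a => X - C a) lam _ ▸ roots_multiset_prod_X_sub_C _

theorem IsEigDecomp.eigenvalues_eq (h : IsEigDecomp A P lam) (h' : IsEigDecomp A P' lam') :
    lam = lam' := by
  have hperm : (List.ofFn lam).Perm (List.ofFn lam') := by
    rw [← Multiset.coe_eq_coe, ← Fin.univ_val_map, ← Fin.univ_val_map, ← h.roots_charpoly,
      ← h'.roots_charpoly]
  exact List.ofFn_injective (hperm.eq_of_sortedGE h.2.1.sortedGE_ofFn h'.2.1.sortedGE_ofFn)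

theorem IsEigDecomp.add_conj_diagonal (h : IsEigDecomp A P lam) (hlam' : Antitone lam') :
    IsEigDecomp (A + P * diagonal (lam' - lam) * Pᵀ) P lam' := by
  refine ⟨h.1, hlam', ?_⟩
  rw [h.2.2, ← Matrix.add_mul, ← Matrix.mul_add, diagonal_add]
  simp only [Pi.sub_apply, add_sub_cancel]

end IsEigDecomp

section Inertia

variable {α : Type*} [Preorder α] {n : ℕ} {f : Fin n → α} {a : α} {i : Fin n}

theorem Antitone.sub_le_ncard_setOf_lt (hf : Antitone f) (hi : f i < a) :
    n - i ≤ {j | f j < a}.ncard :=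
  calc n - i = (Set.Ici i).ncard := by rw [← Finset.coe_Ici, Set.ncard_coe_finset, Fin.card_Ici]
    _ ≤ _ := Set.ncard_le_ncard (fun _ hj => (hf hj).trans_lt hi) (Set.toFinite _)

theorem Antitone.lt_ncard_setOf_gt (hf : Antitone f) (hi : a < f i) :
    (i : ℕ) < {j | a < f j}.ncard :=
  calc (i : ℕ) < (Set.Iic i).ncard := by
        rw [← Finset.coe_Iic, Set.ncard_coe_finset, Fin.card_Iic]; omega
    _ ≤ _ := Set.ncard_le_ncard (fun _ hj => hi.trans_le (hf hj)) (Set.toFinite _)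

end Inertia

theorem Fin.ncard_setOf_le_val (n k : ℕ) : {i : Fin n | k ≤ (i : ℕ)}.ncard = n - k := by
  have hcompl : {i : Fin n | k ≤ (i : ℕ)} = ({i : Fin n | (i : ℕ) < k} : Finset (Fin n))ᶜ := by
    ext; simp
  rw [hcompl, Set.ncard_coe_finset, Finset.card_compl, Fin.card_filter_val_lt, Fintype.card_fin]
  omega

section ShiftFrom

variable {n k : ℕ} {t : ℝ} {lam : Fin n → ℝ}

def shiftFrom (k : ℕ) (t : ℝ) (lam : Fin n → ℝ) : Fin n → ℝ :=
  fun i => if k ≤ (i : ℕ) then lam i - t else lam i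

@[simp]
theorem shiftFrom_zero : shiftFrom k 0 lam = lam := by
  ext i; simp [shiftFrom]

theorem shiftFrom_le (ht : 0 ≤ t) : shiftFrom k t lam ≤ lam := fun i => by
  unfold shiftFrom; split_ifs <;> linarith

theorem antitone_shiftFrom (hl : Antitone lam) (ht : 0 ≤ t) : Antitone (shiftFrom k t lam) :=
  fun i j hij => by
    have hij' : (i : ℕ) ≤ j := hij
    have := hl hij
    unfold shiftFrom; split_ifs <;> first | omega | linarith

theorem continuous_shiftFrom : Continuous fun t => shiftFrom k t lam :=
  continuous_pi fun i => by unfold shiftFrom; split_ifs <;> fun_prop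

theorem setOf_pos_shiftFrom (hnonpos : ∀ i : Fin n, k ≤ (i : ℕ) → lam i ≤ 0) (ht : 0 ≤ t) :
    {i | 0 < shiftFrom k t lam i} = {i | 0 < lam i} := by
  ext i
  simp only [Set.mem_ofPred_eq, shiftFrom]
  split_ifs with hi
  · constructor <;> intro <;> linarith [hnonpos i hi]
  · rfl

theorem setOf_neg_shiftFrom (hnonneg : ∀ i : Fin n, (i : ℕ) < k → 0 ≤ lam i)
    (hnonpos : ∀ i : Fin n, k ≤ (i : ℕ) → lam i ≤ 0) (ht : 0 < t) :
    {i | shiftFrom k t lam i < 0} = {i : Fin n | k ≤ (i : ℕ)} := by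
  ext i
  simp only [Set.mem_ofPred_eq, shiftFrom]
  split_ifs with hi
  · simp only [hi, iff_true]; linarith [hnonpos i hi]
  · simp only [hi, iff_false, not_lt]; exact hnonneg i (not_le.1 hi)

theorem inertia_shiftFrom {p q q' : ℕ} (hl : Antitone lam)
    (hp : {i | 0 < lam i}.ncard = p) (hq' : {i | lam i < 0}.ncard = q')
    (hq'q : q' ≤ q) (hpq : p + q ≤ n) (ht : 0 < t) :
    {i | 0 < shiftFrom (n - q) t lam i}.ncard = p ∧
      {i | shiftFrom (n - q) t lam i < 0}.ncard = q := by
  have hnonneg : ∀ i : Fin n, (i : ℕ) < n - q → 0 ≤ lam i := fun i hi =>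
    not_lt.1 fun hneg => by have := hl.sub_le_ncard_setOf_lt hneg; omega
  have hnonpos : ∀ i : Fin n, n - q ≤ (i : ℕ) → lam i ≤ 0 := fun i hi =>
    not_lt.1 fun hpos => by have := hl.lt_ncard_setOf_gt hpos; omega
  rw [setOf_pos_shiftFrom hnonpos ht.le, setOf_neg_shiftFrom hnonneg hnonpos ht,
    Fin.ncard_setOf_le_val]
  omega

end ShiftFrom

def WSRCQFor {m n : ℕ} (g : Em m → Mat n) (x : Em m) (P : Mat n) (lam : Fin n → ℝ) : Prop :=
  ∀ C : Mat n, C.IsSymm →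
    ∃ (v : Em m) (B : Mat n), B.IsSymm ∧
      (∀ i j, lam i = 0 → lam j < 0 → B i j = 0) ∧
      (∀ i j, lam i < 0 → lam j < 0 → B i j = 0) ∧
      C = fderiv ℝ g x v + P * B * Pᵀ

theorem WSRCQFor.of_le {m n : ℕ} {g : Em m → Mat n} {x : Em m} {P : Mat n}
    {lam lam' : Fin n → ℝ} (h : WSRCQFor g x P lam') (hle : lam' ≤ lam) : WSRCQFor g x P lam := by
  intro C hC
  obtain ⟨v, B, hB, hβγ, hγγ, hCeq⟩ := h C hC
  refine ⟨v, B, hB, fun i j hi hj => ?_,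
    fun i j hi hj => hγγ i j ((hle i).trans_lt hi) ((hle j).trans_lt hj), hCeq⟩
  rcases ((hle i).trans hi.le).lt_or_eq with hi' | hi'
  · exact hγγ i j hi' ((hle j).trans_lt hj)
  · exact hβγ i j hi' ((hle j).trans_lt hj)

theorem WSRCQ_closed_across_strata_general {m n p q : ℕ}
    (g : Em m → Mat n)
    (hpq : p + q ≤ n)
    (U : Set (Em m × Mat n)) (hU : IsOpen U)
    (h : ∀ z ∈ U ∩ lstratum g p q, WSRCQ g z) :
    ∀ q' : ℕ, q' ≤ q → ∀ z ∈ U ∩ lstratum g p q', WSRCQ g z := by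
  rintro q' hq'q z ⟨hzU, hzsym, P₀, lam, hdec₀, hp, hq'⟩ P lam' hdec
  obtain rfl := hdec₀.eigenvalues_eq hdec
  let lamt : ℝ → Fin n → ℝ := fun t => shiftFrom (n - q) t lam
  let zt : ℝ → Em m × Mat n := fun t => (z.1, z.2 + P * diagonal (lamt t - lam) * Pᵀ)
  have hzt : Continuous zt := by
    have := continuous_shiftFrom (k := n - q) (lam := lam)
    fun_prop
  have hzt0 : zt 0 = z := by simp [zt, lamt]
  obtain ⟨t, htU, ht⟩ : ∃ t, zt t ∈ U ∧ 0 < t :=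
    ((hzt.continuousAt.eventually_mem (hU.mem_nhds (by rwa [hzt0]))).filter_mono
      nhdsWithin_le_nhds |>.and (self_mem_nhdsWithin (s := Set.Ioi 0))).exists
  have hdect : IsEigDecomp (Gmap g (zt t)) P (lamt t) := by
    simpa only [Gmap, add_assoc] using hdec.add_conj_diagonal (antitone_shiftFrom hdec.2.1 ht.le)
  have hsymt : (zt t).2.IsSymm := hzsym.add <| by
    simp only [IsSymm, transpose_mul, diagonal_transpose, transpose_transpose, Matrix.mul_assoc]
  obtain ⟨hpt, hqt⟩ := inertia_shiftFrom hdec.2.1 hp hq' hq'q hpq ht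
  exact WSRCQFor.of_le (h (zt t) ⟨htU, hsymt, P, _, hdect, hpt, hqt⟩ P _ hdect)
    (shiftFrom_le ht.le)

/-- Closedness of the W-SRCQ across strata: if the W-SRCQ holds on
`U ∩ M̃_{p,q}` for an open `U`, then it holds on `U ∩ M̃_{p,q'}` for every `0 ≤ q' ≤ q`. -/
theorem WSRCQ_closed_across_strata {m n p q : ℕ}
    (g : Em m → Mat n)
    (hg : ContDiff ℝ 2 g) (hgs : ∀ x, (g x).IsSymm)
    (hpq : p + q ≤ n)
    (U : Set (Em m × Mat n)) (hU : IsOpen U)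
    (h : ∀ z ∈ U ∩ lstratum g p q, WSRCQ g z) :
    ∀ q' : ℕ, q' ≤ q → ∀ z ∈ U ∩ lstratum g p q', WSRCQ g z :=
  WSRCQ_closed_across_strata_general g hpq U hU h
end
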